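/- arXiv:2509.20773 — 2 statements merged into one kernel-verified Lean document; each statement's English description precedes it below -/
import Mathlib

section
/- Let (u,v) be a mutually abelian-bordered pair of binary words with |u| = |v| = n ≥ 3, and set i = lsb(u,v) and j = lsb(v,u). Then i + j > n if and only if there exist nonempty binary words α, γ, β, β', γ', α' such that u = αγβ, v = β'γ'α', αγ ~ γ'α', γβ ~ β'γ', |αγ| = j, |γβ| = i, and both (γβ, β'γ') and (αγ, γ'α') are mutually abelian-unbordered pairs. -/
/-! The window `u.drop (n - i) ~ v.take i` realizing `i = lsb(u,v)` is mutually abelian-unbordered: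
an internal border of the window would be a shorter internal border of `(u, v)`, and since the
two halves of the window are abelian equivalent, complementing an external border gives an
internal one. When `i + j > n`, the windows for `lsb(u,v)` and `lsb(v,u)` overlap in `u` and in `v`
in a factor of length `i + j - n`, which cuts `u` and `v` into the required three pieces.
Conversely `|αγ| + |γβ| = n + |γ| > n`. -/

/-- Abelian equivalence of binary words; the alphabet `{a, b}` is encoded by
`Bool` with `a = true` and `b = false`. -/
def AbEq (x y : List Bool) : Prop :=
  x.count true = y.count true ∧ x.count false = y.count false

/-- `(x, y)` is an internal abelian-border of `(u, v)`: `x` is a nonempty proper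
suffix of `u`, `y` is a proper prefix of `v`, and `x ~ y`. -/
def IsIntBorder (u v x y : List Bool) : Prop :=
  x ≠ [] ∧ x ≠ u ∧ x <:+ u ∧ y <+: v ∧ y ≠ v ∧ AbEq x y

/-- `(x, y)` is an external abelian-border of `(u, v)`: `x` is a nonempty proper
prefix of `u`, `y` is a proper suffix of `v`, and `x ~ y`. -/
def IsExtBorder (u v x y : List Bool) : Prop :=
  x ≠ [] ∧ x ≠ u ∧ x <+: u ∧ y <:+ v ∧ y ≠ v ∧ AbEq x y

/-- `(u, v)` has an internal abelian-border. -/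
def HasIntB (u v : List Bool) : Prop := ∃ x y, IsIntBorder u v x y

/-- `(u, v)` has an external abelian-border. -/
def HasExtB (u v : List Bool) : Prop := ∃ x y, IsExtBorder u v x y

/-- `(u, v)` is mutually abelian-bordered. -/
def MAB (u v : List Bool) : Prop := HasIntB u v ∧ HasExtB u v

/-- `(u, v)` is mutually abelian-unbordered. -/
def MAU (u v : List Bool) : Prop := ¬ HasIntB u v ∧ ¬ HasExtB u v

/-- `lsb u v` is the length of the shortest internal abelian-border of `(u, v)`:
the least `t` with `1 ≤ t ≤ |u| - 1` such that the suffix of `u` of length `t`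
is abelian equivalent to the prefix of `v` of length `t`. -/
noncomputable def lsb (u v : List Bool) : ℕ :=
  sInf {t | 1 ≤ t ∧ t ≤ u.length - 1 ∧ AbEq (u.drop (u.length - t)) (v.take t)}

open List

theorem AbEq.symm {x y : List Bool} (h : AbEq x y) : AbEq y x := ⟨h.1.symm, h.2.symm⟩

theorem AbEq.length_eq {x y : List Bool} (h : AbEq x y) : x.length = y.length := by
  rw [← count_true_add_count_false x, ← count_true_add_count_false y, h.1, h.2]

theorem AbEq.ne_nil_iff {x y : List Bool} (h : AbEq x y) : x ≠ [] ↔ y ≠ [] := by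
  simp only [ne_eq, ← length_eq_zero_iff, h.length_eq]

theorem AbEq.of_append_cross {p q r s : List Bool} (h : AbEq (p ++ q) (r ++ s))
    (hps : AbEq p s) : AbEq q r := by
  obtain ⟨ht, hf⟩ := h
  obtain ⟨hpt, hpf⟩ := hps
  simp only [count_append] at ht hf
  exact ⟨by omega, by omega⟩

theorem IsIntBorder.length_lt {u v x y : List Bool} (h : IsIntBorder u v x y) :
    x.length < u.length :=
  lt_of_le_of_ne h.2.2.1.length_le fun hl => h.2.1 (h.2.2.1.eq_of_length hl)

theorem IsIntBorder.mono {u v u' v' x y : List Bool} (h : IsIntBorder u' v' x y)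
    (hu : u' <:+ u) (hv : v' <+: v) : IsIntBorder u v x y := by
  obtain ⟨hx0, hxu, hxs, hyp, hyv, hxy⟩ := h
  refine ⟨hx0, ?_, hxs.trans hu, hyp.trans hv, ?_, hxy⟩
  · rintro rfl
    exact hxu (hxs.eq_of_length (le_antisymm hxs.length_le hu.length_le))
  · rintro rfl
    exact hyv (hyp.eq_of_length (le_antisymm hyp.length_le hv.length_le))

theorem hasIntB_iff_hasExtB_swap {u v : List Bool} : HasIntB u v ↔ HasExtB v u := by
  constructor
  · rintro ⟨x, y, hx0, hxu, hxs, hyp, hyv, hxy⟩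
    exact ⟨y, x, hxy.ne_nil_iff.mp hx0, hyv, hyp, hxs, hxu, hxy.symm⟩
  · rintro ⟨y, x, hy0, hyv, hyp, hxs, hxu, hyx⟩
    exact ⟨x, y, hyx.ne_nil_iff.mp hy0, hxu, hxs, hyp, hyv, hyx.symm⟩

theorem MAU.symm {u v : List Bool} (h : MAU u v) : MAU v u :=
  ⟨fun hi => h.2 (hasIntB_iff_hasExtB_swap.mp hi),
    fun he => h.1 (hasIntB_iff_hasExtB_swap.mpr he)⟩

theorem AbEq.hasIntB_of_hasExtB {u v : List Bool} (huv : AbEq u v) (h : HasExtB u v) :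
    HasIntB u v := by
  obtain ⟨x, y, hx0, hxu, ⟨x', rfl⟩, ⟨y', rfl⟩, hyv, hxy⟩ := h
  have hy0 : y ≠ [] := hxy.ne_nil_iff.mp hx0
  refine ⟨x', y', ?_, ?_, suffix_append _ _, prefix_append _ _, ?_,
    huv.of_append_cross hxy⟩
  · rintro rfl
    exact hxu (append_nil x).symm
  · simpa using hx0
  · simpa using hy0

theorem AbEq.mau_of_not_hasIntB {u v : List Bool} (huv : AbEq u v) (h : ¬ HasIntB u v) :
    MAU u v :=
  ⟨h, fun he => h (huv.hasIntB_of_hasExtB he)⟩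

theorem lsb_eq_zero_or_mem (u v : List Bool) :
    lsb u v = 0 ∨ (1 ≤ lsb u v ∧ lsb u v ≤ u.length - 1 ∧
      AbEq (u.drop (u.length - lsb u v)) (v.take (lsb u v))) := by
  rcases Set.eq_empty_or_nonempty
    {t | 1 ≤ t ∧ t ≤ u.length - 1 ∧ AbEq (u.drop (u.length - t)) (v.take t)} with h | h
  · left
    rw [lsb, h, Nat.sInf_empty]
  · exact Or.inr (Nat.sInf_mem h)

theorem lsb_le_length_sub_one (u v : List Bool) : lsb u v ≤ u.length - 1 := by
  rcases lsb_eq_zero_or_mem u v with h | h <;> omega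

theorem abEq_drop_take_lsb (u v : List Bool) :
    AbEq (u.drop (u.length - lsb u v)) (v.take (lsb u v)) := by
  rcases lsb_eq_zero_or_mem u v with h | h
  · rw [h]
    exact ⟨by simp, by simp⟩
  · exact h.2.2

theorem lsb_le_of_isIntBorder {u v x y : List Bool} (h : IsIntBorder u v x y) :
    lsb u v ≤ x.length := by
  have hlt := h.length_lt
  obtain ⟨hx0, -, hxs, hyp, -, hxy⟩ := h
  have hx : u.drop (u.length - x.length) = x := (suffix_iff_eq_drop.mp hxs).symm
  have hy : v.take x.length = y := by
    rw [hxy.length_eq]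
    exact (prefix_iff_eq_take.mp hyp).symm
  exact Nat.sInf_le ⟨length_pos_iff.mpr hx0, by omega, by rwa [hx, hy]⟩

theorem mau_drop_take_lsb (u v : List Bool) :
    MAU (u.drop (u.length - lsb u v)) (v.take (lsb u v)) := by
  refine (abEq_drop_take_lsb u v).mau_of_not_hasIntB ?_
  rintro ⟨x, y, hb⟩
  have hmin := lsb_le_of_isIntBorder (hb.mono (drop_suffix _ _) (take_prefix _ _))
  have hlt := hb.length_lt
  rw [length_drop] at hlt
  omega

theorem List.exists_overlap_split {α : Type*} (l : List α) {p s : ℕ} (hp : p < l.length)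
    (hs : s < l.length) (hps : l.length < p + s) :
    ∃ x y z : List α, x ≠ [] ∧ y ≠ [] ∧ z ≠ [] ∧ l = x ++ y ++ z ∧
      x ++ y = l.take p ∧ y ++ z = l.drop (l.length - s) := by
  set a := l.length - s
  refine ⟨l.take a, (l.drop a).take (p - a), l.drop p, ?_, ?_, ?_, ?_, ?_, ?_⟩
  · simp only [ne_eq, ← length_eq_zero_iff, length_take]; omega
  · simp only [ne_eq, ← length_eq_zero_iff, length_take, length_drop]; omega
  · simp only [ne_eq, ← length_eq_zero_iff, length_drop]; omega
  · rw [← take_add, Nat.add_sub_cancel' (by omega), take_append_drop]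
  · rw [← take_add, Nat.add_sub_cancel' (by omega)]
  · have hdrop : l.drop p = (l.drop a).drop (p - a) := by
      rw [drop_drop, Nat.add_sub_cancel' (by omega)]
    rw [hdrop, take_append_drop]

theorem stmt_3_general (n : ℕ) (u v : List Bool)
    (hu : u.length = n) (hv : v.length = n)
    (i j : ℕ) (hi : i = lsb u v) (hj : j = lsb v u) :
    n < i + j ↔
      ∃ α γ β β' γ' α' : List Bool,
        α ≠ [] ∧ γ ≠ [] ∧ β ≠ [] ∧ β' ≠ [] ∧ γ' ≠ [] ∧ α' ≠ [] ∧
        u = α ++ γ ++ β ∧ v = β' ++ γ' ++ α' ∧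
        AbEq (α ++ γ) (γ' ++ α') ∧ AbEq (γ ++ β) (β' ++ γ') ∧
        (α ++ γ).length = j ∧ (γ ++ β).length = i ∧
        MAU (γ ++ β) (β' ++ γ') ∧ MAU (α ++ γ) (γ' ++ α') := by
  subst hi hj hu
  constructor
  · intro hlt
    have hi_le := lsb_le_length_sub_one u v
    have hj_le := lsb_le_length_sub_one v u
    obtain ⟨α, γ, β, hα, hγ, hβ, hu', hαγ, hγβ⟩ :=
      u.exists_overlap_split (p := lsb v u) (s := lsb u v) (by omega) (by omega) (by omega)
    obtain ⟨β', γ', α', hβ', hγ', hα', hv', hβ'γ', hγ'α'⟩ :=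
      v.exists_overlap_split (p := lsb u v) (s := lsb v u) (by omega) (by omega) (by omega)
    refine ⟨α, γ, β, β', γ', α', hα, hγ, hβ, hβ', hγ', hα', hu', hv', ?_⟩
    rw [hαγ, hγβ, hβ'γ', hγ'α']
    exact ⟨(abEq_drop_take_lsb v u).symm, abEq_drop_take_lsb u v,
      by simp only [length_take]; omega, by simp only [length_drop]; omega,
      mau_drop_take_lsb u v, (mau_drop_take_lsb v u).symm⟩
  · rintro ⟨α, γ, β, -, -, -, -, hγ, -, -, -, -, rfl, -, -, -, hj, hi, -, -⟩
    have hγ_pos := length_pos_iff.mpr hγ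
    simp only [length_append] at hi hj ⊢
    omega

theorem stmt_3 (n : ℕ) (hn : 3 ≤ n) (u v : List Bool)
    (hu : u.length = n) (hv : v.length = n) (hmab : MAB u v)
    (i j : ℕ) (hi : i = lsb u v) (hj : j = lsb v u) :
    n < i + j ↔
      ∃ α γ β β' γ' α' : List Bool,
        α ≠ [] ∧ γ ≠ [] ∧ β ≠ [] ∧ β' ≠ [] ∧ γ' ≠ [] ∧ α' ≠ [] ∧
        u = α ++ γ ++ β ∧ v = β' ++ γ' ++ α' ∧
        AbEq (α ++ γ) (γ' ++ α') ∧ AbEq (γ ++ β) (β' ++ γ') ∧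
        (α ++ γ).length = j ∧ (γ ++ β).length = i ∧
        MAU (γ ++ β) (β' ++ γ') ∧ MAU (α ++ γ) (γ' ++ α') :=
  stmt_3_general n u v hu hv i j hi hj
end

section
/- Let (u,v) be a mutually abelian-bordered pair of binary words with |u| = |v| = n ≥ 3, i = lsb(u,v), j = lsb(v,u), and i + j > n, and let u = αγβ, v = β'γ'α' be a decomposition into nonempty binary words with αγ ~ γ'α', γβ ~ β'γ', |αγ| = j, |γβ| = i, and (γβ, β'γ') and (αγ, γ'α') both mutually abelian-unbordered. Then ||α|_c − |α'|_c| = 1 for every letter c ∈ {a,b} if and only if i + j − n = 1. -/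
lemma cnt (l : List Bool) : l.count true + l.count false = l.length := by
  induction l with
  | nil => simp
  | cons h t ih => cases h <;> simp [List.count_cons] <;> omega

lemma abeq_iff (x y : List Bool) :
    AbEq x y ↔ x.length = y.length ∧ x.count true = y.count true := by
  have hx := cnt x; have hy := cnt y
  constructor
  · rintro ⟨h1, h2⟩; exact ⟨by omega, h1⟩
  · rintro ⟨h1, h2⟩; exact ⟨h2, by omega⟩

lemma take_step (l : List Bool) (t : ℕ) :
    (l.take t).count true ≤ (l.take (t+1)).count true ∧
    (l.take (t+1)).count true ≤ (l.take t).count true + 1 := by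
  induction l generalizing t with
  | nil => simp
  | cons h tl ih =>
    cases t with
    | zero => cases h <;> simp [List.count_cons]
    | succ t =>
      have := ih t
      cases h <;> simp [List.count_cons] <;> omega

lemma drop_step (l : List Bool) (s : ℕ) :
    (l.drop (s+1)).count true ≤ (l.drop s).count true ∧
    (l.drop s).count true ≤ (l.drop (s+1)).count true + 1 := by
  induction l generalizing s with
  | nil => simp
  | cons h tl ih =>
    cases s with
    | zero => cases h <;> simp [List.count_cons]
    | succ s => simpa using ih s

lemma same_sign (f : ℕ → ℤ) (m : ℕ)
    (hstep : ∀ t, t < m → (f (t+1) - f t).natAbs ≤ 1)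
    (hnz : ∀ t, 1 ≤ t → t ≤ m → f t ≠ 0) :
    ∀ t, 1 ≤ t → t ≤ m → (0 < f t ↔ 0 < f 1) := by
  intro t
  induction t with
  | zero => omega
  | succ t ih =>
    intro h1 h2
    rcases Nat.eq_zero_or_pos t with h | h
    · subst h; rfl
    · have iht := ih h (by omega)
      have hs := hstep t (by omega)
      have h3 := hnz t h (by omega)
      have h4 := hnz (t+1) (by omega) h2
      omega

lemma arith_key (a a' gc gc' dc dc' xc : ℕ) (k : ℤ)
    (hc1 : a + gc = gc' + a')
    (hd1 : ((a:ℤ) - a').natAbs = 1)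
    (hcδ : dc + xc = gc) (hx1 : xc ≤ 1)
    (hcδ' : dc' ≤ gc' ∧ gc' ≤ dc' + 1)
    (hnz2 : ((dc' + a' : ℕ) : ℤ) - ((a + dc : ℕ) : ℤ) ≠ 0)
    (hs1 : (0 < (a':ℤ) - a) ↔ 0 < k)
    (hs2 : (0 < ((dc' + a' : ℕ) : ℤ) - ((a + dc : ℕ) : ℤ)) ↔ 0 < k) :
    dc = dc' := by omega

theorem stmt_4 (n : ℕ) (hn : 3 ≤ n) (u v : List Bool)
    (hu : u.length = n) (hv : v.length = n) (hmab : MAB u v)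
    (i j : ℕ) (hi : i = lsb u v) (hj : j = lsb v u) (hij : n < i + j)
    (α γ β β' γ' α' : List Bool)
    (hα : α ≠ []) (hγ : γ ≠ []) (hβ : β ≠ [])
    (hβ' : β' ≠ []) (hγ' : γ' ≠ []) (hα' : α' ≠ [])
    (hud : u = α ++ γ ++ β) (hvd : v = β' ++ γ' ++ α')
    (he1 : AbEq (α ++ γ) (γ' ++ α')) (he2 : AbEq (γ ++ β) (β' ++ γ'))
    (hlj : (α ++ γ).length = j) (hli : (γ ++ β).length = i)
    (hm1 : MAU (γ ++ β) (β' ++ γ')) (hm2 : MAU (α ++ γ) (γ' ++ α')) :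
    (∀ c : Bool, ((α.count c : ℤ) - (α'.count c : ℤ)).natAbs = 1) ↔ i + j - n = 1 := by
  -- length bookkeeping
  have hαp : 0 < α.length := List.length_pos_iff.mpr hα
  have hγp : 0 < γ.length := List.length_pos_iff.mpr hγ
  have hβp : 0 < β.length := List.length_pos_iff.mpr hβ
  have hβ'p : 0 < β'.length := List.length_pos_iff.mpr hβ'
  have hγ'p : 0 < γ'.length := List.length_pos_iff.mpr hγ'
  have hα'p : 0 < α'.length := List.length_pos_iff.mpr hα'
  have hL1 : α.length + γ.length = γ'.length + α'.length := by
    have := ((abeq_iff _ _).mp he1).1; simpa using this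
  have hL2 : γ.length + β.length = β'.length + γ'.length := by
    have := ((abeq_iff _ _).mp he2).1; simpa using this
  have hLu : α.length + γ.length + β.length = n := by
    have := hu; rw [hud] at this; simpa [Nat.add_assoc] using this
  have hLv : β'.length + γ'.length + α'.length = n := by
    have := hv; rw [hvd] at this; simpa [Nat.add_assoc] using this
  have hLj : α.length + γ.length = j := by simpa using hlj
  have hLi : γ.length + β.length = i := by simpa using hli
  have hlaa : α.length = α'.length := by omega
  have hlgg : γ.length = γ'.length := by omega
  have hlbb : β.length = β'.length := by omega
  -- count bookkeeping
  have hc1 : α.count true + γ.count true = γ'.count true + α'.count true := by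
    have := he1.1; simpa using this
  have hc2 : γ.count true + β.count true = β'.count true + γ'.count true := by
    have := he2.1; simpa using this
  have hcγ : γ.count true ≤ γ.length := List.count_le_length
  have hcγ' : γ'.count true ≤ γ'.length := List.count_le_length
  -- d ≠ 0
  have hdne : α.count true ≠ α'.count true := by
    intro h
    apply hm2.2
    refine ⟨α, α', hα, ?_, ⟨γ, rfl⟩, ⟨γ', rfl⟩, ?_, (abeq_iff _ _).mpr ⟨hlaa, h⟩⟩
    · intro he
      have h2 := congrArg List.length he
      rw [List.length_append] at h2
      omega
    · intro he
      have h2 := congrArg List.length he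
      rw [List.length_append] at h2
      omega
  constructor
  · -- forward: |d| = 1 → γ.length = 1
    intro hall
    have hd1 := hall true
    by_contra hne
    have hg2 : 2 ≤ γ.length := by omega
    -- decompose γ = δ ++ [x], γ' = y :: δ'
    rcases List.eq_nil_or_concat γ with h | ⟨δ, x, hγd⟩
    · exact hγ h
    rcases List.exists_cons_of_ne_nil hγ' with ⟨y, δ', hγ'd⟩
    rw [List.concat_eq_append] at hγd
    have hδl : δ.length + 1 = γ.length := by rw [hγd]; simp
    have hδ'l : δ'.length + 1 = γ'.length := by rw [hγ'd]; simp
    have hcδ : δ.count true + ([x].count true) = γ.count true := by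
      rw [hγd]; simp [List.count_append]
    have hx1 : [x].count true ≤ 1 := List.count_le_length
    have hcδ' : δ'.count true ≤ γ'.count true ∧ γ'.count true ≤ δ'.count true + 1 := by
      rw [hγ'd]; cases y <;> simp [List.count_cons]
    -- the walk
    set f : ℕ → ℤ := fun t => ((v.drop (n - t)).count true : ℤ) - (u.take t).count true with hf
    clear_value f
    have hstep : ∀ t, t < j - 1 → (f (t+1) - f t).natAbs ≤ 1 := by
      intro t ht
      have htn : t + 1 ≤ n := by omega
      have h1 := take_step u t
      have h2 := drop_step v (n - (t+1))
      have hrw : n - (t+1) + 1 = n - t := by omega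
      rw [hrw] at h2
      simp only [hf]
      omega
    have hnz : ∀ t, 1 ≤ t → t ≤ j - 1 → f t ≠ 0 := by
      intro t h1 h2 h0
      have hjt : t < j := by omega
      have hdl : (v.drop (n - t)).length = t := by
        rw [List.length_drop, hv]; omega
      have htl : (u.take t).length = t := by
        rw [List.length_take, hu]; omega
      have hceq : (v.drop (n - t)).count true = (u.take t).count true := by
        simp only [hf] at h0; omega
      have hmem : t ∈ {s | 1 ≤ s ∧ s ≤ v.length - 1 ∧
          AbEq (v.drop (v.length - s)) (u.take s)} := by
        refine ⟨h1, by rw [hv]; omega, ?_⟩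
        rw [hv]
        exact (abeq_iff _ _).mpr ⟨by omega, hceq⟩
      have := Nat.sInf_le hmem
      rw [← lsb, ← hj] at this
      omega
    have hsign := same_sign f (j - 1) hstep hnz
    -- f (n - i) = α'.count - α.count
    have hv1 : v.drop i = α' := by
      rw [hvd, show i = (β' ++ γ').length by simp; omega, List.drop_left]
    have hu1 : u.take (α.length) = α := by
      rw [hud, List.append_assoc, List.take_left]
    have hfni : f (n - i) = (α'.count true : ℤ) - α.count true := by
      simp only [hf]
      rw [show n - (n - i) = i by omega, hv1, show n - i = α.length by omega, hu1]
    -- f (j-1) = (δ'.count + α'.count) - (α.count + δ.count)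
    have hv2 : v.drop (n - (j-1)) = δ' ++ α' := by
      have hveq : v = (β' ++ [y]) ++ (δ' ++ α') := by rw [hvd, hγ'd]; simp
      rw [hveq, show n - (j-1) = (β' ++ [y]).length by simp; omega, List.drop_left]
    have hu2 : u.take (j-1) = α ++ δ := by
      have hueq : u = (α ++ δ) ++ ([x] ++ β) := by rw [hud, hγd]; simp
      rw [hueq, show j - 1 = (α ++ δ).length by simp; omega, List.take_left]
    have hfj1 : f (j-1) = ((δ'.count true + α'.count true : ℕ) : ℤ)
        - ((α.count true + δ.count true : ℕ) : ℤ) := by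
      simp only [hf]
      rw [hv2, hu2]
      simp [List.count_append]
    have hr1 : 1 ≤ n - i := by omega
    have hr2 : n - i ≤ j - 1 := by omega
    have hr3 : 1 ≤ j - 1 := by omega
    have hs1 := hsign (n - i) hr1 hr2
    have hs2 := hsign (j - 1) hr3 le_rfl
    have hnz1 := hnz (n - i) hr1 hr2
    have hnz2 := hnz (j - 1) hr3 le_rfl
    -- conclude count δ = count δ'
    have hδeq : δ.count true = δ'.count true := by
      rw [hfni] at hs1 hnz1
      rw [hfj1] at hs2 hnz2
      have hkey : (0 < (α'.count true : ℤ) - α.count true) ↔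
          (0 < ((δ'.count true + α'.count true : ℕ) : ℤ)
            - ((α.count true + δ.count true : ℕ) : ℤ)) := hs1.trans hs2.symm
      exact arith_key (List.count true α) (List.count true α') (List.count true γ)
        (List.count true γ') (List.count true δ) (List.count true δ')
        (List.count true [x]) (f 1) hc1 hd1 hcδ hx1 hcδ' hnz2 hs1 hs2
    -- build forbidden external border of (γ ++ β, β' ++ γ')
    apply hm1.2
    refine ⟨δ, δ', ?_, ?_, ⟨[x] ++ β, by rw [hγd]; simp⟩,
      ⟨β' ++ [y], by rw [hγ'd]; simp⟩, ?_, (abeq_iff _ _).mpr ⟨by omega, hδeq⟩⟩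
    · intro h; rw [h] at hδl; simp at hδl; omega
    · intro h; apply_fun List.length at h; simp [List.length_append] at h; omega
    · intro h; apply_fun List.length at h; simp [List.length_append] at h; omega
  · -- backward: γ.length = 1 → |d| = 1 for all c
    intro hg1
    have hg : γ.length = 1 := by omega
    have hcα := cnt α
    have hcα' := cnt α'
    intro c
    cases c
    · -- false
      omega
    · -- true
      omega
end
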